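/- Let (U_n)_{n≥0} be the VLMC defined by a probabilized infinite comb with q_{0^∞}(0) ≠ 1. Then (U_n) admits a stationary probability measure on L if and only if the numerical series ∑_{n≥0} c_n converges. -/

import Mathlib

open MeasureTheory
open ProbabilityTheory (Kernel IsMarkovKernel)
open scoped ENNReal

namespace VLMC

/-- Left-infinite sequences over the alphabet `{0,1}`; `s 0` is the rightmost
(most recent) letter, `s 1` the one before it, etc. -/
abbrev L : Type := ℕ → Bool

/-- Append the letter `b` on the right of the left-infinite sequence `s`. -/
def extend (b : Bool) (s : L) : L := fun n => match n with
  | 0 => b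
  | k + 1 => s k

/-- Sequences whose letters, read from the rightmost one leftwards, start with `u`. -/
def cylRev (u : List Bool) : Set L := {s | ∀ i < u.length, s i = u.getD i false}

/-- The cylinder `Lw` of left-infinite sequences admitting the finite word `w` as a suffix. -/
def cyl (w : List Bool) : Set L := cylRev w.reverse

/-- `π` is a stationary (invariant) probability measure for the kernel `κ`. -/
def IsStationary (κ : Kernel L L) (π : Measure L) : Prop :=
  ∀ B : Set L, MeasurableSet B → π B = ∫⁻ s, κ s B ∂π

/-- `cₙ = ∏_{k=0}^{n-1} q_{0ᵏ1}(0)` (with `c₀ = 1`), for the infinite comb. -/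
noncomputable def combC (q : ℕ → Bool → ℝ≥0∞) (n : ℕ) : ℝ≥0∞ :=
  ∏ k ∈ Finset.range n, q k false

/-- The left-infinite sequence `0^∞`. -/
def zeroSeq : L := fun _ => false

/-- `κ` is the transition kernel of the VLMC associated with the probabilized
infinite comb whose contexts are the words `0ⁿ1`, `n ≥ 0` (with probability
measures `q n` on the alphabet) and the infinite word `0^∞` (with probability
measure `qinf`) : from a state with context `0ⁿ1` (i.e. ending with `10ⁿ`),
a letter `α` is appended on the right with probability `q n α`, and from the
state `0^∞` with probability `qinf α`. -/
def IsCombKernel (q : ℕ → Bool → ℝ≥0∞) (qinf : Bool → ℝ≥0∞) (κ : Kernel L L) : Prop :=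
  (∀ (n : ℕ) (s : L), s ∈ cylRev (List.replicate n false ++ [true]) →
      κ s = q n false • Measure.dirac (extend false s)
          + q n true • Measure.dirac (extend true s)) ∧
  κ zeroSeq = qinf false • Measure.dirac (extend false zeroSeq)
            + qinf true • Measure.dirac (extend true zeroSeq)

/-! Split `L` into the cylinders `contextCyl n` of the states with context `0ⁿ1` and the single
state `0^∞`. If `π` is stationary, then `π {0^∞} = q_{0^∞}(0) π {0^∞}` with `q_{0^∞}(0) ≠ 1`
forces `π {0^∞} = 0`, and `π (contextCyl (n + 1)) = q_{0ⁿ1}(0) π (contextCyl n)`, so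
`π (contextCyl n) = cₙ π (contextCyl 0)` and summing over `n` gives `(∑ cₙ) π (contextCyl 0) = 1`.

Conversely, if `S = ∑ cₙ < ∞`, every finite word gets the mass `combWeight` that a stationary
measure must give its cylinder. These masses are consistent, hence (as for any consistent family
on the Cantor space `L`, via a quantile map from `[0, 1)`) they are the cylinder masses of a
probability measure, and since cylinders form a generating π-system, stationarity only has to be
checked on them, where it is a telescoping sum. -/

theorem cylRev_nil : cylRev [] = Set.univ := by
  simp [cylRev]

theorem extend_mem_cylRev_cons {a b : Bool} {s : L} {v : List Bool} :
    extend b s ∈ cylRev (a :: v) ↔ b = a ∧ s ∈ cylRev v := by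
  show (∀ i < v.length + 1, _) ↔ _
  rw [Nat.forall_lt_succ_left]
  rfl

theorem measurableSet_cylRev (u : List Bool) : MeasurableSet (cylRev u) := by
  have : cylRev u = ⋂ i ∈ Finset.range u.length, (fun s : L => s i) ⁻¹' {u.getD i false} := by
    ext s; simp [cylRev]
  rw [this]
  exact Finset.measurableSet_biInter _ fun i _ => measurable_pi_apply i (measurableSet_singleton _)

theorem cylRev_subset_cylRev {u v : List Bool} (h : u <+: v) : cylRev v ⊆ cylRev u := by
  obtain ⟨t, rfl⟩ := h
  intro s hs i hi
  rw [hs i (by simp; omega), List.getD_append _ _ _ _ hi]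

theorem disjoint_cylRev {u v : List Bool} {i : ℕ} (hu : i < u.length) (hv : i < v.length)
    (h : u.getD i false ≠ v.getD i false) : Disjoint (cylRev u) (cylRev v) :=
  Set.disjoint_left.2 fun _ hsu hsv => h ((hsu i hu).symm.trans (hsv i hv))

theorem isPiSystem_range_cylRev : IsPiSystem (Set.range cylRev) := by
  have key {u v : List Bool} {s : L} (h : u.length ≤ v.length) (hu : s ∈ cylRev u)
      (hv : s ∈ cylRev v) : cylRev v ⊆ cylRev u := fun t ht i hi => by
    rw [ht i (hi.trans_le h), ← hv i (hi.trans_le h), hu i hi]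
  rintro _ ⟨u, rfl⟩ _ ⟨v, rfl⟩ ⟨s, hu, hv⟩
  rcases le_total u.length v.length with h | h
  · exact ⟨v, (Set.inter_eq_right.2 (key h hu hv)).symm⟩
  · exact ⟨u, (Set.inter_eq_left.2 (key h hv hu)).symm⟩

theorem preimage_apply_true_eq_biUnion_cylRev (i : ℕ) :
    (fun s : L => s i) ⁻¹' {true} =
      ⋃ u ∈ {u : List Bool | u.length = i + 1 ∧ u.getD i false = true}, cylRev u := by
  ext s
  simp only [Set.mem_preimage, Set.mem_singleton_iff, Set.mem_iUnion, exists_prop]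
  refine ⟨fun hs => ⟨List.ofFn fun j : Fin (i + 1) => s j, ⟨by simp, ?_⟩, fun j hj => ?_⟩, ?_⟩
  · rw [List.getD_eq_getElem _ _ (by simp), List.getElem_ofFn]
    exact hs
  · rw [List.getD_eq_getElem _ _ hj, List.getElem_ofFn]
  · rintro ⟨u, ⟨hlen, hi⟩, hu⟩
    rw [hu i (by omega), hi]

theorem measurableSpace_eq_generateFrom_cylRev :
    (inferInstance : MeasurableSpace L) = MeasurableSpace.generateFrom (Set.range cylRev) := by
  refine le_antisymm (iSup_le fun i => measurable_iff_comap_le.1 ?_)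
    (MeasurableSpace.generateFrom_le (by rintro _ ⟨u, rfl⟩; exact measurableSet_cylRev u))
  refine @measurable_to_bool _ (.generateFrom _) _ ?_
  rw [preimage_apply_true_eq_biUnion_cylRev]
  exact .biUnion (Set.to_countable _) fun u _ => .basic _ ⟨u, rfl⟩

theorem ext_of_cylRev {μ ν : Measure L} [IsFiniteMeasure μ]
    (h : ∀ u, μ (cylRev u) = ν (cylRev u)) : μ = ν :=
  ext_of_generate_finite _ measurableSpace_eq_generateFrom_cylRev isPiSystem_range_cylRev
    (by rintro _ ⟨u, rfl⟩; exact h u) (by rw [← cylRev_nil, h])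

section Quantile

variable (w : List Bool → ℝ)

/- For consistent weights `w`, the word `u` is coded by the interval
`quantileIco w u = [quantileLo w u, quantileLo w u + w u)`, which `quantileCut w u` splits into the
intervals of `u ++ [false]` and `u ++ [true]`; `quantileSeq w x` reads off the letters of the
nested intervals containing `x`. -/
noncomputable def quantileLo (u : List Bool) : ℝ :=
  ∑ i ∈ Finset.range u.length, if u.getD i false then w (u.take i ++ [false]) else 0

noncomputable def quantileCut (u : List Bool) : ℝ := quantileLo w u + w (u ++ [false])

def quantileIco (u : List Bool) : Set ℝ := Set.Ico (quantileLo w u) (quantileLo w u + w u)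

noncomputable def quantileWord (x : ℝ) : ℕ → List Bool
  | 0 => []
  | n + 1 => quantileWord x n ++ [decide (quantileCut w (quantileWord x n) ≤ x)]

noncomputable def quantileSeq (x : ℝ) : L := fun n =>
  decide (quantileCut w (quantileWord w x n) ≤ x)

variable {w}

theorem quantileLo_append (u : List Bool) (b : Bool) :
    quantileLo w (u ++ [b]) = quantileLo w u + if b then w (u ++ [false]) else 0 := by
  rw [quantileLo, List.length_append, List.length_singleton, Finset.sum_range_succ, quantileLo]
  congr 1
  · refine Finset.sum_congr rfl fun i hi => ?_
    have hi : i < u.length := Finset.mem_range.1 hi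
    rw [List.getD_append _ _ _ _ hi, List.take_append_of_le_length hi.le]
  · simp

theorem quantileWord_succ (x : ℝ) (n : ℕ) :
    quantileWord w x (n + 1) = quantileWord w x n ++ [quantileSeq w x n] := rfl

theorem quantileWord_eq_ofFn (x : ℝ) (n : ℕ) :
    quantileWord w x n = List.ofFn fun i : Fin n => quantileSeq w x i := by
  induction n with
  | zero => rfl
  | succ n ih => rw [quantileWord_succ, ih, List.ofFn_succ_last]; rfl

theorem quantileSeq_mem_cylRev_iff (x : ℝ) (u : List Bool) :
    quantileSeq w x ∈ cylRev u ↔ quantileWord w x u.length = u := by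
  rw [quantileWord_eq_ofFn, List.ext_get_iff]
  simp +contextual [cylRev, List.getD_eq_getElem?_getD]

variable (hw_nonneg : ∀ u, 0 ≤ w u) (hw_nil : w [] = 1)
  (hw_add : ∀ u, w u = w (u ++ [false]) + w (u ++ [true]))

include hw_nonneg hw_add in
theorem mem_quantileIco_append {x : ℝ} (u : List Bool) (b : Bool) :
    x ∈ quantileIco w (u ++ [b]) ↔
      x ∈ quantileIco w u ∧ decide (quantileCut w u ≤ x) = b := by
  have := hw_nonneg (u ++ [false])
  have := hw_nonneg (u ++ [true])
  cases b <;> simp only [quantileIco, quantileCut, Set.mem_Ico, quantileLo_append, hw_add u] <;>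
    grind

include hw_nonneg hw_nil hw_add in
theorem quantileIco_subset (u : List Bool) : quantileIco w u ⊆ Set.Ico 0 1 := by
  induction u using List.reverseRecOn with
  | nil => simp [quantileIco, quantileLo, hw_nil]
  | append_singleton u b ih =>
    exact fun x hx => ih ((mem_quantileIco_append hw_nonneg hw_add u b).1 hx).1

include hw_nonneg hw_nil hw_add in
theorem quantileWord_length_eq_iff {x : ℝ} (hx : x ∈ Set.Ico 0 1) (u : List Bool) :
    quantileWord w x u.length = u ↔ x ∈ quantileIco w u := by
  induction u using List.reverseRecOn with
  | nil => simpa [quantileIco, quantileLo, hw_nil, quantileWord] using hx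
  | append_singleton u b ih =>
    rw [mem_quantileIco_append hw_nonneg hw_add, ← ih, List.length_append, List.length_singleton,
      quantileWord_succ]
    simp only [List.append_singleton_inj, and_congr_right_iff]
    intro h
    simp only [quantileSeq, h]

theorem measurable_decide_le (c : ℝ) : Measurable fun x : ℝ => decide (c ≤ x) :=
  measurable_to_bool (by
    convert measurableSet_Ici (a := c)
    ext x
    simp)

theorem measurableSet_quantileWord_eq (n : ℕ) (u : List Bool) :
    MeasurableSet {x | quantileWord w x n = u} := by
  induction n generalizing u with
  | zero => exact MeasurableSet.const (([] : List Bool) = u)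
  | succ n ih =>
    have : {x | quantileWord w x (n + 1) = u} = ⋃ v, {x | quantileWord w x n = v} ∩
        (fun x => decide (quantileCut w v ≤ x)) ⁻¹' {b | v ++ [b] = u} := by
      ext x; simp [quantileWord_succ, quantileSeq]
    rw [this]
    exact .iUnion fun v => (ih v).inter (measurable_decide_le _ (.of_discrete))

theorem measurable_quantileSeq : Measurable (quantileSeq w) := by
  refine measurable_pi_lambda _ fun n => measurable_to_bool ?_
  have : (fun x => quantileSeq w x n) ⁻¹' {true} = ⋃ v, {x | quantileWord w x n = v} ∩
      Set.Ici (quantileCut w v) := by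
    ext x; simp [quantileSeq]
  rw [this]
  exact .iUnion fun v => (measurableSet_quantileWord_eq n v).inter measurableSet_Ici

end Quantile

theorem exists_isProbabilityMeasure_cylRev_eq (W : List Bool → ℝ≥0∞) (hW_nil : W [] = 1)
    (hW_add : ∀ u, W u = W (u ++ [false]) + W (u ++ [true])) :
    ∃ μ : Measure L, IsProbabilityMeasure μ ∧ ∀ u, μ (cylRev u) = W u := by
  have hW_le : ∀ u, W u ≤ 1 := by
    intro u
    induction u using List.reverseRecOn with
    | nil => exact hW_nil.le
    | append_singleton u b ih =>
      refine le_trans ?_ ih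
      rw [hW_add u]
      cases b
      · exact le_self_add
      · exact le_add_self
  have hW_ne_top : ∀ u, W u ≠ ∞ := fun u => ne_top_of_le_ne_top ENNReal.one_ne_top (hW_le u)
  set w : List Bool → ℝ := fun u => (W u).toReal
  have hw_add : ∀ u, w u = w (u ++ [false]) + w (u ++ [true]) := fun u => by
    simp only [w, ← ENNReal.toReal_add (hW_ne_top _) (hW_ne_top _), ← hW_add]
  have hw_nil : w [] = 1 := by simp [w, hW_nil]
  have hw_nonneg : ∀ u, 0 ≤ w u := fun u => ENNReal.toReal_nonneg
  set μ := (volume.restrict (Set.Ico (0 : ℝ) 1)).map (quantileSeq w)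
  have hcyl : ∀ u, μ (cylRev u) = W u := by
    intro u
    have hpre : quantileSeq w ⁻¹' cylRev u ∩ Set.Ico 0 1 = quantileIco w u := by
      ext x
      refine ⟨fun ⟨hu, hx⟩ => ?_, fun hu => ?_⟩
      · exact (quantileWord_length_eq_iff hw_nonneg hw_nil hw_add hx u).1
          ((quantileSeq_mem_cylRev_iff x u).1 hu)
      · have hx := quantileIco_subset hw_nonneg hw_nil hw_add u hu
        exact ⟨(quantileSeq_mem_cylRev_iff x u).2
          ((quantileWord_length_eq_iff hw_nonneg hw_nil hw_add hx u).2 hu), hx⟩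
    rw [Measure.map_apply measurable_quantileSeq (measurableSet_cylRev u),
      Measure.restrict_apply (measurable_quantileSeq (measurableSet_cylRev u)), hpre,
      quantileIco, Real.volume_Ico, add_sub_cancel_left, ENNReal.ofReal_toReal (hW_ne_top u)]
  exact ⟨μ, ⟨by rw [← cylRev_nil, hcyl, hW_nil]⟩, hcyl⟩

def contextCyl (n : ℕ) : Set L := cylRev (List.replicate n false ++ [true])

theorem getD_replicate_append_true (n i : ℕ) :
    (List.replicate n false ++ [true]).getD i false = decide (i = n) := by
  rcases lt_trichotomy i n with h | rfl | h
  · simp [List.getD_eq_getElem?_getD, List.getElem?_append, h, h.ne]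
  · simp [List.getD_eq_getElem?_getD]
  · rw [List.getD_eq_default _ _ (by simpa using h)]
    simp [h.ne']

theorem mem_contextCyl {n : ℕ} {s : L} :
    s ∈ contextCyl n ↔ (∀ i < n, s i = false) ∧ s n = true := by
  simp only [contextCyl, cylRev, List.length_append, List.length_replicate, List.length_singleton,
    getD_replicate_append_true, Nat.forall_lt_succ_right]
  simp +contextual [Nat.ne_of_lt]

theorem measurableSet_contextCyl (n : ℕ) : MeasurableSet (contextCyl n) := measurableSet_cylRev _

theorem pairwise_disjoint_contextCyl : Pairwise (Function.onFun Disjoint contextCyl) := by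
  intro n m hnm
  wlog h : n < m generalizing n m
  · exact (this hnm.symm (by omega)).symm
  exact disjoint_cylRev (i := n) (by simp) (by simp; omega)
    (by rw [getD_replicate_append_true, getD_replicate_append_true]; simp [h.ne])

theorem zeroSeq_notMem_contextCyl (n : ℕ) : zeroSeq ∉ contextCyl n := fun h => by
  simpa [zeroSeq] using (mem_contextCyl.1 h).2

theorem compl_iUnion_contextCyl : (⋃ n, contextCyl n)ᶜ = {zeroSeq} := by
  ext s
  simp only [Set.mem_compl_iff, Set.mem_iUnion, not_exists, Set.mem_singleton_iff]
  refine ⟨fun h => funext fun i => ?_, by rintro rfl; exact zeroSeq_notMem_contextCyl⟩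
  by_contra hi
  have hex : ∃ i, s i = true := ⟨i, by simpa [zeroSeq] using hi⟩
  classical
  exact h (Nat.find hex)
    (mem_contextCyl.2 ⟨fun j hj => by simpa using Nat.find_min hex hj, Nat.find_spec hex⟩)

theorem tsum_measure_contextCyl_add_measure_zeroSeq (μ : Measure L) :
    ∑' n, μ (contextCyl n) + μ {zeroSeq} = μ Set.univ := by
  rw [← measure_iUnion pairwise_disjoint_contextCyl measurableSet_contextCyl,
    ← compl_iUnion_contextCyl, measure_add_measure_compl (.iUnion measurableSet_contextCyl)]

theorem lintegral_eq_tsum_contextCyl_add_zeroSeq (μ : Measure L) (f : L → ℝ≥0∞) :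
    ∫⁻ s, f s ∂μ = ∑' n, ∫⁻ s in contextCyl n, f s ∂μ + f zeroSeq * μ {zeroSeq} := by
  rw [← lintegral_add_compl f (.iUnion measurableSet_contextCyl), compl_iUnion_contextCyl,
    lintegral_iUnion measurableSet_contextCyl pairwise_disjoint_contextCyl, lintegral_singleton]

theorem tsum_mul_measure_inter_contextCyl_of_subset {C : Set L} {m : ℕ} (hC : C ⊆ contextCyl m)
    (f : ℕ → ℝ≥0∞) (μ : Measure L) : ∑' n, f n * μ (C ∩ contextCyl n) = f m * μ C := by
  rw [tsum_eq_single m fun n hn => by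
      rw [Set.disjoint_iff_inter_eq_empty.1 ((pairwise_disjoint_contextCyl hn.symm).mono_left hC),
        measure_empty, mul_zero],
    Set.inter_eq_left.2 hC]

theorem cylRev_subset_contextCyl (m : ℕ) (r : List Bool) :
    cylRev (List.replicate m false ++ true :: r) ⊆ contextCyl m :=
  cylRev_subset_cylRev ⟨r, by simp⟩

theorem cylRev_replicate_inter_contextCyl (m n : ℕ) :
    cylRev (List.replicate m false) ∩ contextCyl n = if m ≤ n then contextCyl n else ∅ := by
  split_ifs with h
  · refine Set.inter_eq_right.2 (cylRev_subset_cylRev ⟨List.replicate (n - m) false ++ [true], ?_⟩)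
    rw [← List.append_assoc, ← List.replicate_add, Nat.add_sub_cancel' h]
  · exact Set.disjoint_iff_inter_eq_empty.1
      (disjoint_cylRev (i := n) (by simp; omega) (by simp) (by simp))

theorem tsum_ite_le_eq_tsum_add (m : ℕ) (f : ℕ → ℝ≥0∞) :
    ∑' n, (if m ≤ n then f n else 0) = ∑' k, f (k + m) := by
  rw [← ENNReal.summable.sum_add_tsum_nat_add' (k := m), Finset.sum_eq_zero fun n hn => if_neg
    (by simpa using hn), zero_add]
  exact tsum_congr fun k => if_pos le_add_self

theorem tsum_mul_measure_cylRev_replicate_inter_contextCyl (m : ℕ) (f : ℕ → ℝ≥0∞)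
    (μ : Measure L) : ∑' n, f n * μ (cylRev (List.replicate m false) ∩ contextCyl n) =
      ∑' k, f (k + m) * μ (contextCyl (k + m)) := by
  rw [← tsum_ite_le_eq_tsum_add m fun n => f n * μ (contextCyl n)]
  refine tsum_congr fun n => ?_
  rw [cylRev_replicate_inter_contextCyl]
  split_ifs <;> simp

section Kernel

variable {q : ℕ → Bool → ℝ≥0∞} {qinf : Bool → ℝ≥0∞} {κ : Kernel L L}

theorem extend_ne_zeroSeq_of_mem_contextCyl {n : ℕ} {s : L} (hs : s ∈ contextCyl n) (b : Bool) :
    extend b s ≠ zeroSeq := by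
  intro h
  cases b
  · simpa [extend, zeroSeq, (mem_contextCyl.1 hs).2] using congrFun h (n + 1)
  · simpa [extend, zeroSeq] using congrFun h 0

theorem IsCombKernel.apply_cylRev_cons (hκ : IsCombKernel q qinf κ) {n : ℕ} {s : L}
    (hs : s ∈ contextCyl n) (a : Bool) (v : List Bool) :
    κ s (cylRev (a :: v)) = (cylRev v).indicator (fun _ => q n a) s := by
  rw [hκ.1 n s hs, Measure.add_apply, Measure.smul_apply, Measure.smul_apply,
    Measure.dirac_apply' _ (measurableSet_cylRev _),
    Measure.dirac_apply' _ (measurableSet_cylRev _)]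
  by_cases hv : s ∈ cylRev v <;> cases a <;> simp [Set.indicator, extend_mem_cylRev_cons, hv]

theorem IsCombKernel.apply_zeroSeq_of_mem_contextCyl (hκ : IsCombKernel q qinf κ) {n : ℕ} {s : L}
    (hs : s ∈ contextCyl n) : κ s {zeroSeq} = 0 := by
  simp [hκ.1 n s hs, extend_ne_zeroSeq_of_mem_contextCyl hs]

theorem IsCombKernel.apply_zeroSeq_zeroSeq (hκ : IsCombKernel q qinf κ) :
    κ zeroSeq {zeroSeq} = qinf false := by
  have h0 : extend false zeroSeq = zeroSeq := funext fun i => by cases i <;> rfl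
  have h1 : extend true zeroSeq ≠ zeroSeq := fun h => by simpa [extend, zeroSeq] using congrFun h 0
  simp [hκ.2, h0, h1]

theorem IsCombKernel.lintegral_cylRev_cons (hκ : IsCombKernel q qinf κ) {μ : Measure L}
    (hμ : μ {zeroSeq} = 0) (a : Bool) (v : List Bool) :
    ∫⁻ s, κ s (cylRev (a :: v)) ∂μ = ∑' n, q n a * μ (cylRev v ∩ contextCyl n) := by
  rw [lintegral_eq_tsum_contextCyl_add_zeroSeq, hμ, mul_zero, add_zero]
  refine tsum_congr fun n => ?_
  rw [setLIntegral_congr_fun (measurableSet_contextCyl n) fun s hs => hκ.apply_cylRev_cons hs a v,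
    lintegral_indicator_const (measurableSet_cylRev v),
    Measure.restrict_apply (measurableSet_cylRev v)]

theorem IsCombKernel.lintegral_zeroSeq (hκ : IsCombKernel q qinf κ) (μ : Measure L) :
    ∫⁻ s, κ s {zeroSeq} ∂μ = qinf false * μ {zeroSeq} := by
  rw [lintegral_eq_tsum_contextCyl_add_zeroSeq, hκ.apply_zeroSeq_zeroSeq]
  have : ∀ n, ∫⁻ s in contextCyl n, κ s {zeroSeq} ∂μ = 0 := fun n => by
    rw [setLIntegral_congr_fun (measurableSet_contextCyl n)
      fun s hs => hκ.apply_zeroSeq_of_mem_contextCyl hs, lintegral_zero]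
  simp [this]

end Kernel

theorem tsum_eq_of_eq_add_succ {f d : ℕ → ℝ≥0∞} (h : ∀ n, f n = d n + f (n + 1))
    (hf : Filter.Tendsto f Filter.atTop (nhds 0)) : ∑' n, d n = f 0 := by
  have hpartial : ∀ N, ∑ i ∈ Finset.range N, d i + f N = f 0 := by
    intro N
    induction N with
    | zero => simp
    | succ N ih => rw [Finset.sum_range_succ, add_assoc, ← h, ih]
  have := (ENNReal.tendsto_nat_tsum d).add hf
  simp only [hpartial, add_zero] at this
  exact tendsto_nhds_unique this tendsto_const_nhds

theorem word_eq_replicate_append_or_replicate (v : List Bool) :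
    (∃ m r, v = List.replicate m false ++ true :: r) ∨ ∃ m, v = List.replicate m false := by
  induction v with
  | nil => exact .inr ⟨0, rfl⟩
  | cons b v ih =>
    cases b
    · rcases ih with ⟨m, r, rfl⟩ | ⟨m, rfl⟩
      · exact .inl ⟨m + 1, r, rfl⟩
      · exact .inr ⟨m + 1, rfl⟩
    · exact .inl ⟨0, v, rfl⟩

section Weights

variable (q : ℕ → Bool → ℝ≥0∞)

noncomputable def combTail (m : ℕ) : ℝ≥0∞ := ∑' k, combC q (k + m)

/- `combWeight q u` is the mass a stationary measure gives to `cylRev u` (`u` lists letters from the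
newest one on), with `S = combTail q 0`: the states ending with `0ᵏ` have mass `(∑_{n ≥ k} cₙ) / S`
and those ending with `0ᵐ1` have mass `cₘ / S`; once `v` contains a `1`, the context of the next
letter is `0ᵐ1` with `m = v.idxOf true`. -/
noncomputable def combWeight : List Bool → ℝ≥0∞
  | [] => 1
  | a :: v => if true ∈ v then q (v.idxOf true) a * combWeight v
      else (if a then combC q v.length else combTail q (v.length + 1)) / combTail q 0

variable {q}

theorem combC_zero : combC q 0 = 1 := Finset.prod_range_zero _

theorem combC_succ (n : ℕ) : combC q (n + 1) = combC q n * q n false :=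
  Finset.prod_range_succ _ n

theorem combTail_eq_add (m : ℕ) : combTail q m = combC q m + combTail q (m + 1) := by
  rw [combTail, combTail, tsum_eq_zero_add' ENNReal.summable, zero_add]
  simp only [add_assoc, add_comm 1 m]

theorem combTail_zero : combTail q 0 = ∑' n, combC q n := rfl

theorem combTail_zero_ne_zero : combTail q 0 ≠ 0 :=
  ((combC_zero (q := q) ▸ ENNReal.le_tsum 0 : 1 ≤ combTail q 0).trans_lt' one_pos).ne'

theorem combWeight_cons_replicate_append (a : Bool) (m : ℕ) (r : List Bool) :
    combWeight q (a :: (List.replicate m false ++ true :: r)) =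
      q m a * combWeight q (List.replicate m false ++ true :: r) := by
  simp [combWeight, List.idxOf_append]

theorem combWeight_cons_replicate (a : Bool) (m : ℕ) :
    combWeight q (a :: List.replicate m false) =
      (if a then combC q m else combTail q (m + 1)) / combTail q 0 := by
  simp [combWeight]

theorem combWeight_replicate_append_true (m : ℕ) :
    combWeight q (List.replicate m false ++ [true]) = combC q m / combTail q 0 := by
  induction m with
  | zero => simpa [combC_zero] using combWeight_cons_replicate (q := q) true 0
  | succ m ih =>
    rw [List.replicate_succ, List.cons_append, combWeight_cons_replicate_append, ih, combC_succ]
    simp only [div_eq_mul_inv]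
    ring

variable (hq : ∀ n, q n false + q n true = 1)
  (hS : ∑' n, combC q n ≠ ∞)
include hq hS

theorem combWeight_eq_add (u : List Bool) :
    combWeight q u = combWeight q (u ++ [false]) + combWeight q (u ++ [true]) := by
  induction u with
  | nil =>
    change 1 = combWeight q (false :: List.replicate 0 false) +
      combWeight q (true :: List.replicate 0 false)
    rw [combWeight_cons_replicate, combWeight_cons_replicate, if_neg Bool.false_ne_true, if_pos rfl,
      ENNReal.div_add_div_same, add_comm, ← combTail_eq_add,
      ENNReal.div_self combTail_zero_ne_zero hS]
  | cons a v ih =>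
    rcases word_eq_replicate_append_or_replicate v with ⟨m, r, rfl⟩ | ⟨m, rfl⟩
    · simp only [List.cons_append, List.append_assoc] at ih ⊢
      rw [combWeight_cons_replicate_append, combWeight_cons_replicate_append,
        combWeight_cons_replicate_append, ← mul_add, ← ih]
    · rw [List.cons_append, List.cons_append, ← List.replicate_succ',
        combWeight_cons_replicate_append a m [], combWeight_replicate_append_true,
        combWeight_cons_replicate, combWeight_cons_replicate]
      cases a
      · rw [if_neg Bool.false_ne_true, if_neg Bool.false_ne_true, combTail_eq_add (m + 1),
          combC_succ]
        simp only [div_eq_mul_inv]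
        ring
      · rw [if_pos rfl, if_pos rfl, combC_succ]
        conv_lhs => rw [← mul_one (combC q m), ← hq m]
        simp only [div_eq_mul_inv]
        ring

theorem tsum_mul_measure_inter_contextCyl {μ : Measure L}
    (hμ : ∀ u, μ (cylRev u) = combWeight q u) (a : Bool) (v : List Bool) :
    ∑' n, q n a * μ (cylRev v ∩ contextCyl n) = combWeight q (a :: v) := by
  rcases word_eq_replicate_append_or_replicate v with ⟨m, r, rfl⟩ | ⟨m, rfl⟩
  · rw [tsum_mul_measure_inter_contextCyl_of_subset (cylRev_subset_contextCyl m r), hμ,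
      combWeight_cons_replicate_append]
  rw [tsum_mul_measure_cylRev_replicate_inter_contextCyl, combWeight_cons_replicate]
  simp only [contextCyl, hμ, combWeight_replicate_append_true, div_eq_mul_inv, ← mul_assoc,
    ENNReal.tsum_mul_right]
  congr 1
  cases a
  · rw [if_neg Bool.false_ne_true]
    exact tsum_congr fun k => by rw [← add_assoc, combC_succ, mul_comm]
  · rw [if_pos rfl]
    refine (tsum_eq_of_eq_add_succ (f := fun k => combC q (k + m)) (fun k => ?_)
      ((ENNReal.tendsto_atTop_zero_of_tsum_ne_top hS).comp (Filter.tendsto_add_atTop_nat m))).trans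
      (by rw [zero_add])
    rw [Nat.add_right_comm, combC_succ]
    conv_lhs => rw [← mul_one (combC q (k + m)), ← hq (k + m)]
    ring

end Weights

theorem isStationary_of_bind_eq {κ : Kernel L L} {π : Measure L} (h : π.bind κ = π) :
    IsStationary κ π := fun B hB => by
  conv_lhs => rw [← h]
  exact Measure.bind_apply hB κ.aemeasurable

section Comb

variable {q : ℕ → Bool → ℝ≥0∞} {qinf : Bool → ℝ≥0∞} {κ : Kernel L L}

theorem IsCombKernel.exists_isStationary [IsMarkovKernel κ] (hκ : IsCombKernel q qinf κ)
    (hq : ∀ n, q n false + q n true = 1) (hS : ∑' n, combC q n ≠ ∞) :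
    ∃ π : Measure L, IsProbabilityMeasure π ∧ IsStationary κ π := by
  obtain ⟨π, hπ, hcyl⟩ :=
    exists_isProbabilityMeasure_cylRev_eq (combWeight q) rfl (combWeight_eq_add hq hS)
  have hzero : π {zeroSeq} = 0 := by
    have h := tsum_measure_contextCyl_add_measure_zeroSeq π
    simp only [contextCyl, hcyl, combWeight_replicate_append_true, div_eq_mul_inv, ENNReal.tsum_mul_right,
      ← combTail_zero, measure_univ, ENNReal.mul_inv_cancel combTail_zero_ne_zero hS] at h
    simpa using h
  refine ⟨π, hπ, isStationary_of_bind_eq (ext_of_cylRev fun u => ?_).symm⟩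
  rw [Measure.bind_apply (measurableSet_cylRev u) κ.aemeasurable]
  cases u with
  | nil => simp [cylRev_nil]
  | cons a v =>
    rw [hκ.lintegral_cylRev_cons hzero, tsum_mul_measure_inter_contextCyl hq hS hcyl, hcyl]

theorem IsCombKernel.tsum_combC_ne_top (hκ : IsCombKernel q qinf κ) (hirr : qinf false ≠ 1)
    {π : Measure L} [IsProbabilityMeasure π] (hπ : IsStationary κ π) :
    ∑' n, combC q n ≠ ∞ := by
  have hzero : π {zeroSeq} = 0 := by
    by_contra h0
    have h := (hπ _ (measurableSet_singleton _)).trans (hκ.lintegral_zeroSeq π)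
    exact hirr ((ENNReal.mul_eq_right h0 (measure_ne_top π _)).1 h.symm)
  have hstep (n : ℕ) : π (contextCyl (n + 1)) = q n false * π (contextCyl n) := by
    rw [hπ _ (measurableSet_contextCyl _), contextCyl, List.replicate_succ, List.cons_append,
      hκ.lintegral_cylRev_cons hzero,
      tsum_mul_measure_inter_contextCyl_of_subset (cylRev_subset_contextCyl n []), contextCyl]
  have hgeom (n : ℕ) : π (contextCyl n) = combC q n * π (contextCyl 0) := by
    induction n with
    | zero => rw [combC_zero, one_mul]
    | succ n ih => rw [hstep, ih, combC_succ]; ring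
  have htotal : (∑' n, combC q n) * π (contextCyl 0) = 1 := by
    have h := tsum_measure_contextCyl_add_measure_zeroSeq π
    rwa [hzero, add_zero, measure_univ, tsum_congr hgeom, ENNReal.tsum_mul_right] at h
  have h0 : π (contextCyl 0) ≠ 0 := fun h0 => by simp [h0] at htotal
  rw [ENNReal.eq_inv_of_mul_eq_one_left htotal]
  exact ENNReal.inv_ne_top.2 h0

end Comb

theorem comb_exists_stationary_iff_general
    (q : ℕ → Bool → ℝ≥0∞) (qinf : Bool → ℝ≥0∞)
    (hq : ∀ n, q n false + q n true = 1)
    (hirr : qinf false ≠ 1)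
    (κ : Kernel L L) [IsMarkovKernel κ] (hκ : IsCombKernel q qinf κ) :
    (∃ π : Measure L, IsProbabilityMeasure π ∧ IsStationary κ π) ↔
      (∑' n, combC q n) ≠ ∞ :=
  ⟨fun ⟨_, _, hπ⟩ => hκ.tsum_combC_ne_top hirr hπ, hκ.exists_isStationary hq⟩

/-- (Infinite comb, irreducible case, existence.)
If `q_{0^∞}(0) ≠ 1`, the VLMC defined by a probabilized infinite comb admits a
stationary probability measure on `L` if and only if the series `∑ cₙ`
converges. -/
theorem comb_exists_stationary_iff
    (q : ℕ → Bool → ℝ≥0∞) (qinf : Bool → ℝ≥0∞)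
    (hq : ∀ n, q n false + q n true = 1) (hqinf : qinf false + qinf true = 1)
    (hirr : qinf false ≠ 1)
    (κ : Kernel L L) [IsMarkovKernel κ] (hκ : IsCombKernel q qinf κ) :
    (∃ π : Measure L, IsProbabilityMeasure π ∧ IsStationary κ π) ↔
      (∑' n, combC q n) ≠ ∞ :=
  comb_exists_stationary_iff_general q qinf hq hirr κ hκ

end VLMC
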